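/- Let M₁ ∈ ℝ^{d₁×n} and M₂ ∈ ℝ^{d₂×n} with the null space of M₁ contained in the null space of M₂, and let P be the Moore–Penrose pseudoinverse of M₁. Let W ⊆ ℝˢ, let Ψ₁ : W → ℝ^{d₁×s} and Ψ₂ : W → ℝ^{d₂×s}, and let L₁, L₂ ≥ 0 and α > 0 be real numbers such that for all w ∈ W: σ_max(Ψ₁(w)) ≤ L₁, σ_max(Ψ₂(w)) ≤ L₂, and σ_min((I − M₁P) Ψ₁(w)) ≥ α. Then for every X ∈ ℝⁿ and every w ∈ W, setting Z₁ = M₁ X + Ψ₁(w) w and Z₂ = M₂ X + Ψ₂(w) w, it holds that ‖Z₂‖ ≤ ((1 + L₁/α) σ_max(M₂ P) + L₂/α) ‖Z₁‖. -/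

import Mathlib

open Matrix Filter

/-- Euclidean norm of a vector. -/
noncomputable def euclidEnorm {ι : Type*} [Fintype ι] (v : ι → ℝ) : ℝ :=
  Real.sqrt (∑ i, v i ^ 2)

/-- Largest singular value: maximum Euclidean gain over unit vectors. -/
noncomputable def sigmaMax {ι κ : Type*} [Fintype ι] [Fintype κ]
    (M : Matrix ι κ ℝ) : ℝ :=
  sSup {y | ∃ x : κ → ℝ, euclidEnorm x = 1 ∧ y = euclidEnorm (M.mulVec x)}

/-- Smallest gain: minimum Euclidean gain over unit vectors. -/
noncomputable def sigmaMin {ι κ : Type*} [Fintype ι] [Fintype κ]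
    (M : Matrix ι κ ℝ) : ℝ :=
  sInf {y | ∃ x : κ → ℝ, euclidEnorm x = 1 ∧ y = euclidEnorm (M.mulVec x)}

/-- `P` is the Moore–Penrose pseudoinverse of `A`. -/
def IsMPInv {ι κ : Type*} [Fintype ι] [Fintype κ]
    (A : Matrix ι κ ℝ) (P : Matrix κ ι ℝ) : Prop :=
  A * P * A = A ∧ P * A * P = P ∧ (A * P)ᵀ = A * P ∧ (P * A)ᵀ = P * A

/-- Block-Toeplitz matrix `T_j^{l,w}(g)`: the (a,b) block (1-indexed) is
`g (j + l - a + b - 1)`. -/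
def Tblk {q m : ℕ} (g : ℕ → Matrix (Fin q) (Fin m) ℝ) (j l w : ℕ) :
    Matrix (Fin l × Fin q) (Fin w × Fin m) ℝ :=
  Matrix.of fun a b => g (j + l + (b.1 : ℕ) - ((a.1 : ℕ) + 1)) a.2 b.2

/-- Block upper-triangular Toeplitz matrix `T_p(g)`: the (a,b) block is `g (b - a)`
for `b ≥ a` and `0` otherwise. -/
def Ttri {q m : ℕ} (g : ℕ → Matrix (Fin q) (Fin m) ℝ) (p : ℕ) :
    Matrix (Fin p × Fin q) (Fin p × Fin m) ℝ :=
  Matrix.of fun a b =>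
    if (a.1 : ℕ) ≤ (b.1 : ℕ) then g ((b.1 : ℕ) - (a.1 : ℕ)) a.2 b.2 else 0

lemma euclidEnorm_nonneg {ι : Type*} [Fintype ι] (v : ι → ℝ) : 0 ≤ euclidEnorm v :=
  Real.sqrt_nonneg _

lemma euclidEnorm_eq_sqrt_dot {ι : Type*} [Fintype ι] (v : ι → ℝ) :
    euclidEnorm v = Real.sqrt (v ⬝ᵥ v) := by
  simp [euclidEnorm, dotProduct, sq]

lemma dot_self_nonneg {ι : Type*} [Fintype ι] (v : ι → ℝ) : 0 ≤ v ⬝ᵥ v :=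
  Finset.sum_nonneg fun i _ => mul_self_nonneg _

lemma euclidEnorm_sq {ι : Type*} [Fintype ι] (v : ι → ℝ) : euclidEnorm v ^ 2 = v ⬝ᵥ v := by
  rw [euclidEnorm_eq_sqrt_dot, Real.sq_sqrt (dot_self_nonneg v)]

lemma euclidEnorm_le_of_dot {ι κ : Type*} [Fintype ι] [Fintype κ] (v : ι → ℝ) (u : κ → ℝ)
    (h : v ⬝ᵥ v ≤ u ⬝ᵥ u) : euclidEnorm v ≤ euclidEnorm u := by
  rw [euclidEnorm_eq_sqrt_dot, euclidEnorm_eq_sqrt_dot]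
  exact Real.sqrt_le_sqrt h

lemma euclidEnorm_smul {ι : Type*} [Fintype ι] (c : ℝ) (v : ι → ℝ) :
    euclidEnorm (c • v) = |c| * euclidEnorm v := by
  simp only [euclidEnorm, Pi.smul_apply, smul_eq_mul, mul_pow, ← Finset.mul_sum]
  rw [Real.sqrt_mul (sq_nonneg c), Real.sqrt_sq_eq_abs]

lemma euclidEnorm_eq_zero {ι : Type*} [Fintype ι] {v : ι → ℝ} (h : euclidEnorm v = 0) : v = 0 := by
  rw [euclidEnorm, Real.sqrt_eq_zero (Finset.sum_nonneg fun i _ => sq_nonneg _)] at h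
  funext i
  have := (Finset.sum_eq_zero_iff_of_nonneg (fun i _ => sq_nonneg (v i))).mp h i (Finset.mem_univ i)
  exact pow_eq_zero_iff (two_ne_zero) |>.mp this

lemma euclidEnorm_add_le {ι : Type*} [Fintype ι] (a b : ι → ℝ) :
    euclidEnorm (a + b) ≤ euclidEnorm a + euclidEnorm b := by
  have ha : euclidEnorm a = ‖(WithLp.equiv 2 (ι → ℝ)).symm a‖ := by
    simp [euclidEnorm, EuclideanSpace.norm_eq, sq_abs]
  have hb : euclidEnorm b = ‖(WithLp.equiv 2 (ι → ℝ)).symm b‖ := by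
    simp [euclidEnorm, EuclideanSpace.norm_eq, sq_abs]
  have hab : euclidEnorm (a + b) = ‖(WithLp.equiv 2 (ι → ℝ)).symm a + (WithLp.equiv 2 (ι → ℝ)).symm b‖ := by
    simp [euclidEnorm, EuclideanSpace.norm_eq, sq_abs]
  rw [ha, hb, hab]
  exact norm_add_le _ _

lemma sigmaMax_nonneg {ι κ : Type*} [Fintype ι] [Fintype κ] (M : Matrix ι κ ℝ) :
    0 ≤ sigmaMax M :=
  Real.sSup_nonneg (by rintro y ⟨x, -, rfl⟩; exact euclidEnorm_nonneg _)

lemma sigmaMin_nonneg {ι κ : Type*} [Fintype ι] [Fintype κ] (M : Matrix ι κ ℝ) :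
    0 ≤ sigmaMin M :=
  Real.sInf_nonneg (by rintro y ⟨x, -, rfl⟩; exact euclidEnorm_nonneg _)

lemma euclidEnorm_mulVec_le_frob {ι κ : Type*} [Fintype ι] [Fintype κ]
    (M : Matrix ι κ ℝ) (x : κ → ℝ) :
    euclidEnorm (M.mulVec x) ≤ Real.sqrt (∑ i, ∑ j, M i j ^ 2) * euclidEnorm x := by
  rw [euclidEnorm, euclidEnorm, ← Real.sqrt_mul (by positivity)]
  apply Real.sqrt_le_sqrt
  rw [Finset.sum_mul]
  apply Finset.sum_le_sum
  intro i _
  calc M.mulVec x i ^ 2 = (∑ j, M i j * x j) ^ 2 := by rfl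
    _ ≤ (∑ j, M i j ^ 2) * (∑ j, x j ^ 2) := by
        simpa [sq] using Finset.sum_mul_sq_le_sq_mul_sq Finset.univ (fun j => M i j) x

lemma bddAbove_gain {ι κ : Type*} [Fintype ι] [Fintype κ] (M : Matrix ι κ ℝ) :
    BddAbove {y | ∃ x : κ → ℝ, euclidEnorm x = 1 ∧ y = euclidEnorm (M.mulVec x)} := by
  refine ⟨Real.sqrt (∑ i, ∑ j, M i j ^ 2), ?_⟩
  rintro y ⟨x, hx, rfl⟩
  simpa [hx] using euclidEnorm_mulVec_le_frob M x

lemma euclidEnorm_mulVec_le {ι κ : Type*} [Fintype ι] [Fintype κ]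
    (M : Matrix ι κ ℝ) (v : κ → ℝ) :
    euclidEnorm (M.mulVec v) ≤ sigmaMax M * euclidEnorm v := by
  rcases eq_or_ne v 0 with rfl | hv
  · simp [Matrix.mulVec_zero, euclidEnorm]
  · set c := euclidEnorm v with hc
    have hc0 : 0 < c := lt_of_le_of_ne (euclidEnorm_nonneg v) fun h => hv (euclidEnorm_eq_zero h.symm)
    set u := c⁻¹ • v with hu
    have hu1 : euclidEnorm u = 1 := by
      rw [hu, euclidEnorm_smul, abs_of_pos (inv_pos.mpr hc0), inv_mul_cancel₀ hc0.ne']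
    have hmem : euclidEnorm (M.mulVec u) ∈ {y | ∃ x : κ → ℝ, euclidEnorm x = 1 ∧ y = euclidEnorm (M.mulVec x)} :=
      ⟨u, hu1, rfl⟩
    have hle : euclidEnorm (M.mulVec u) ≤ sigmaMax M := le_csSup (bddAbove_gain M) hmem
    have heq : euclidEnorm (M.mulVec u) = c⁻¹ * euclidEnorm (M.mulVec v) := by
      rw [hu, Matrix.mulVec_smul, euclidEnorm_smul, abs_of_pos (inv_pos.mpr hc0)]
    rw [heq] at hle
    calc euclidEnorm (M.mulVec v) = c * (c⁻¹ * euclidEnorm (M.mulVec v)) := by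
          field_simp
      _ ≤ c * sigmaMax M := by exact mul_le_mul_of_nonneg_left hle hc0.le
      _ = sigmaMax M * c := mul_comm _ _

lemma sigmaMin_mul_le {ι κ : Type*} [Fintype ι] [Fintype κ]
    (M : Matrix ι κ ℝ) (v : κ → ℝ) :
    sigmaMin M * euclidEnorm v ≤ euclidEnorm (M.mulVec v) := by
  rcases eq_or_ne v 0 with rfl | hv
  · simp [Matrix.mulVec_zero, euclidEnorm]
  · set c := euclidEnorm v with hc
    have hc0 : 0 < c := lt_of_le_of_ne (euclidEnorm_nonneg v) fun h => hv (euclidEnorm_eq_zero h.symm)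
    set u := c⁻¹ • v with hu
    have hu1 : euclidEnorm u = 1 := by
      rw [hu, euclidEnorm_smul, abs_of_pos (inv_pos.mpr hc0), inv_mul_cancel₀ hc0.ne']
    have hmem : euclidEnorm (M.mulVec u) ∈ {y | ∃ x : κ → ℝ, euclidEnorm x = 1 ∧ y = euclidEnorm (M.mulVec x)} :=
      ⟨u, hu1, rfl⟩
    have hle : sigmaMin M ≤ euclidEnorm (M.mulVec u) :=
      csInf_le ⟨0, by rintro y ⟨x, -, rfl⟩; exact euclidEnorm_nonneg _⟩ hmem
    have heq : euclidEnorm (M.mulVec u) = c⁻¹ * euclidEnorm (M.mulVec v) := by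
      rw [hu, Matrix.mulVec_smul, euclidEnorm_smul, abs_of_pos (inv_pos.mpr hc0)]
    rw [heq] at hle
    calc sigmaMin M * c ≤ (c⁻¹ * euclidEnorm (M.mulVec v)) * c := by
          exact mul_le_mul_of_nonneg_right hle hc0.le
      _ = euclidEnorm (M.mulVec v) := by field_simp

lemma proj_contract {ι : Type*} [Fintype ι] [DecidableEq ι] (Q : Matrix ι ι ℝ)
    (hsym : Qᵀ = Q) (hidem : Q * Q = Q) (z : ι → ℝ) :
    euclidEnorm ((1 - Q).mulVec z) ≤ euclidEnorm z := by
  apply euclidEnorm_le_of_dot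
  have key : (Q.mulVec z) ⬝ᵥ (Q.mulVec z) = z ⬝ᵥ (Q.mulVec z) := by
    rw [Matrix.dotProduct_mulVec, ← Matrix.mulVec_transpose, hsym,
      Matrix.mulVec_mulVec, hidem]
    exact dotProduct_comm _ _
  have hnn : 0 ≤ (Q.mulVec z) ⬝ᵥ (Q.mulVec z) := dot_self_nonneg _
  have hcomm : (Q.mulVec z) ⬝ᵥ z = z ⬝ᵥ (Q.mulVec z) := dotProduct_comm _ _
  rw [Matrix.sub_mulVec, Matrix.one_mulVec, sub_dotProduct, dotProduct_sub,
    dotProduct_sub]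
  linarith

set_option maxHeartbeats 1000000 in
/-- nonlinear gain bound relating `Z₂ = M₂X + Ψ₂(w)w` to
`Z₁ = M₁X + Ψ₁(w)w`. -/
theorem stmt5 {d₁ d₂ n s : ℕ}
    (M₁ : Matrix (Fin d₁) (Fin n) ℝ) (M₂ : Matrix (Fin d₂) (Fin n) ℝ)
    (hnull : ∀ x : Fin n → ℝ, M₁.mulVec x = 0 → M₂.mulVec x = 0)
    (P : Matrix (Fin n) (Fin d₁) ℝ) (hP : IsMPInv M₁ P)
    (W : Set (Fin s → ℝ))
    (Ψ₁ : (Fin s → ℝ) → Matrix (Fin d₁) (Fin s) ℝ)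
    (Ψ₂ : (Fin s → ℝ) → Matrix (Fin d₂) (Fin s) ℝ)
    (L₁ L₂ α : ℝ) (hL₁ : 0 ≤ L₁) (hL₂ : 0 ≤ L₂) (hα : 0 < α)
    (hΨ₁ : ∀ w ∈ W, sigmaMax (Ψ₁ w) ≤ L₁)
    (hΨ₂ : ∀ w ∈ W, sigmaMax (Ψ₂ w) ≤ L₂)
    (hmin : ∀ w ∈ W, α ≤ sigmaMin ((1 - M₁ * P) * Ψ₁ w)) :
    ∀ (X : Fin n → ℝ), ∀ w ∈ W,
      euclidEnorm (M₂.mulVec X + (Ψ₂ w).mulVec w) ≤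
        ((1 + L₁ / α) * sigmaMax (M₂ * P) + L₂ / α) *
          euclidEnorm (M₁.mulVec X + (Ψ₁ w).mulVec w) := by
  intro X w hw
  obtain ⟨h1, h2, h3, h4⟩ := hP
  set Q : Matrix (Fin d₁) (Fin d₁) ℝ := M₁ * P with hQ
  have hQsym : Qᵀ = Q := h3
  have hQidem : Q * Q = Q := by
    rw [hQ, ← Matrix.mul_assoc, Matrix.mul_assoc M₁ P M₁, ← Matrix.mul_assoc]
    rw [h1]
  set Z₁ : Fin d₁ → ℝ := M₁.mulVec X + (Ψ₁ w).mulVec w with hZ₁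
  set q : ℝ := euclidEnorm Z₁ with hq
  set ww : ℝ := euclidEnorm w with hww
  have hq0 : 0 ≤ q := euclidEnorm_nonneg _
  have hww0 : 0 ≤ ww := euclidEnorm_nonneg _
  -- Step 1: α * ww ≤ q
  have step1 : α * ww ≤ q := by
    have hproj : ((1 - Q) * Ψ₁ w).mulVec w = (1 - Q).mulVec Z₁ := by
      rw [← Matrix.mulVec_mulVec, hZ₁, Matrix.mulVec_add]
      have : (1 - Q).mulVec (M₁.mulVec X) = 0 := by
        rw [Matrix.mulVec_mulVec, Matrix.sub_mul, Matrix.one_mul, hQ,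
          Matrix.mul_assoc, ← Matrix.mul_assoc, h1, sub_self, Matrix.zero_mulVec]
      rw [this, zero_add]
    have t1 : α * ww ≤ sigmaMin ((1 - Q) * Ψ₁ w) * ww :=
      mul_le_mul_of_nonneg_right (hmin w hw) hww0
    have t2 : sigmaMin ((1 - Q) * Ψ₁ w) * ww ≤ euclidEnorm (((1 - Q) * Ψ₁ w).mulVec w) :=
      sigmaMin_mul_le _ _
    have t3 : euclidEnorm ((1 - Q).mulVec Z₁) ≤ q := proj_contract Q hQsym hQidem Z₁
    rw [hproj] at t2
    linarith
  have hwq : ww ≤ q / α := by rw [le_div_iff₀ hα]; linarith [step1]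
  -- Step 2: M₂ X = (M₂ P) (M₁ X)
  have step2 : M₂.mulVec X = (M₂ * P).mulVec (M₁.mulVec X) := by
    have hker : M₁.mulVec (X - (P * M₁).mulVec X) = 0 := by
      rw [Matrix.mulVec_sub, Matrix.mulVec_mulVec, ← Matrix.mul_assoc, h1, sub_self]
    have := hnull _ hker
    rw [Matrix.mulVec_sub, Matrix.mulVec_mulVec, sub_eq_zero] at this
    rw [Matrix.mulVec_mulVec, Matrix.mul_assoc]
    exact this
  -- Step 3: decompose Z₂
  have decomp : M₂.mulVec X + (Ψ₂ w).mulVec w =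
      (M₂ * P).mulVec Z₁ + (-1 : ℝ) • (M₂ * P).mulVec ((Ψ₁ w).mulVec w) + (Ψ₂ w).mulVec w := by
    rw [step2, hZ₁, Matrix.mulVec_add]
    module
  set σ : ℝ := sigmaMax (M₂ * P) with hσ
  have hσ0 : 0 ≤ σ := sigmaMax_nonneg _
  have b1 : euclidEnorm ((M₂ * P).mulVec Z₁) ≤ σ * q := euclidEnorm_mulVec_le _ _
  have b2 : euclidEnorm ((-1 : ℝ) • (M₂ * P).mulVec ((Ψ₁ w).mulVec w)) ≤ σ * (L₁ * ww) := by
    rw [euclidEnorm_smul]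
    simp only [abs_neg, abs_one, one_mul]
    calc euclidEnorm ((M₂ * P).mulVec ((Ψ₁ w).mulVec w)) ≤ σ * euclidEnorm ((Ψ₁ w).mulVec w) :=
          euclidEnorm_mulVec_le _ _
      _ ≤ σ * (L₁ * ww) := by
          apply mul_le_mul_of_nonneg_left _ hσ0
          calc euclidEnorm ((Ψ₁ w).mulVec w) ≤ sigmaMax (Ψ₁ w) * ww := euclidEnorm_mulVec_le _ _
            _ ≤ L₁ * ww := mul_le_mul_of_nonneg_right (hΨ₁ w hw) hww0
  have b3 : euclidEnorm ((Ψ₂ w).mulVec w) ≤ L₂ * ww := by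
    calc euclidEnorm ((Ψ₂ w).mulVec w) ≤ sigmaMax (Ψ₂ w) * ww := euclidEnorm_mulVec_le _ _
      _ ≤ L₂ * ww := mul_le_mul_of_nonneg_right (hΨ₂ w hw) hww0
  calc euclidEnorm (M₂.mulVec X + (Ψ₂ w).mulVec w)
      = euclidEnorm ((M₂ * P).mulVec Z₁ + (-1 : ℝ) • (M₂ * P).mulVec ((Ψ₁ w).mulVec w)
          + (Ψ₂ w).mulVec w) := by rw [decomp]
    _ ≤ euclidEnorm ((M₂ * P).mulVec Z₁ + (-1 : ℝ) • (M₂ * P).mulVec ((Ψ₁ w).mulVec w))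
          + euclidEnorm ((Ψ₂ w).mulVec w) := euclidEnorm_add_le _ _
    _ ≤ (euclidEnorm ((M₂ * P).mulVec Z₁) + euclidEnorm ((-1 : ℝ) • (M₂ * P).mulVec ((Ψ₁ w).mulVec w)))
          + euclidEnorm ((Ψ₂ w).mulVec w) := by
        exact add_le_add (euclidEnorm_add_le _ _) le_rfl
    _ ≤ (σ * q + σ * (L₁ * ww)) + L₂ * ww := by
        exact add_le_add (add_le_add b1 b2) b3
    _ ≤ (σ * q + σ * (L₁ * (q / α))) + L₂ * (q / α) := by gcongr
    _ = ((1 + L₁ / α) * σ + L₂ / α) * q := by field_simp
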